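/- Let f be an expansive homeomorphism with expansivity constant r₀ of a compact metric space M, and P a finite collection of disjoint open sets of diameter < r₀ with dense union. Suppose that for every n ≥ 1 the iterated partition Pⁿ := {A₀ ∩ f⁻¹A₁ ∩ … ∩ f^{-(n-1)}A_{n-1} ≠ ∅} has local multiplicity at most 4, i.e., every point of M lies in the closure of at most 4 elements of Pⁿ. Then the coding map p : Σ(f,P) → M satisfies #p⁻¹(x) ≤ 4 for every x ∈ M. -/

import Mathlib

/-!
A point `p A = x` of the fibre lies in the closure of every finite cylinder of `A`: the closed
sets `⋂_{|k| ≤ N} f⁻ᵏ (closure A_k)` decrease to `{x}`, so by compactness they eventually lie in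
any neighbourhood of `x`, and they contain the (nonempty) long cylinders of `A`. Shifting by
`fᵃ`, every word `A_a … A_{a+n-1}` is then an `n`-cylinder whose closure contains `fᵃ x`.
Finitely many distinct sequences are already separated by their words on a window `[-m, m]`,
so the multiplicity bound at `f⁻ᵐ x` bounds the number of them.
-/

open Set

theorem Equiv.Perm.continuous_zpow {M : Type*} [TopologicalSpace M] {f : Equiv.Perm M}
    (hf : Continuous f) (hf' : Continuous f.symm) (n : ℤ) : Continuous ⇑(f ^ n) := by
  let toPerm : (M ≃ₜ M) →* Equiv.Perm M := MonoidHom.mk' Homeomorph.toEquiv fun _ _ => rfl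
  exact map_zpow toPerm ⟨f, hf, hf'⟩ n ▸ (Homeomorph.mk f hf hf' ^ n).continuous

theorem Set.finite_and_ncard_le_of_forall_finite_subset {α : Type*} {s : Set α} {n : ℕ}
    (h : ∀ t ⊆ s, t.Finite → t.ncard ≤ n) : s.Finite ∧ s.ncard ≤ n := by
  have hfin : s.Finite := by
    by_contra hinf
    obtain ⟨t, hts, htfin, htcard⟩ := Set.Infinite.exists_subset_ncard_eq hinf (n + 1)
    have := h t hts htfin
    omega
  exact ⟨hfin, h s subset_rfl hfin⟩

theorem Set.Finite.exists_injOn_restrict_window {α : Type*} {t : Set (ℤ → α)} (ht : t.Finite) :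
    ∃ m : ℕ, InjOn (fun (A : ℤ → α) (k : Fin (2 * m + 1)) => A (-m + k)) t := by
  have hsep : ∀ q ∈ t ×ˢ t, ∀ᶠ m : ℕ in Filter.atTop,
      q.1 ≠ q.2 → ∃ k : Fin (2 * m + 1), q.1 (-m + k) ≠ q.2 (-m + k) := by
    rintro ⟨A, B⟩ -
    by_cases hAB : A = B
    · exact Filter.Eventually.of_forall fun _ h => absurd hAB h
    obtain ⟨j, hj⟩ := Function.ne_iff.mp hAB
    refine Filter.eventually_atTop.2 ⟨j.natAbs, fun m hm _ => ⟨⟨(j + m).toNat, by omega⟩, ?_⟩⟩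
    have hk : -(m : ℤ) + ((j + m).toNat : ℕ) = j := by omega
    simpa only [hk] using hj
  obtain ⟨m, hm⟩ := ((ht.prod ht).eventually_all.2 hsep).exists
  refine ⟨m, fun A hA B hB hAB => ?_⟩
  by_contra hne
  obtain ⟨k, hk⟩ := hm (A, B) ⟨hA, hB⟩ hne
  exact hk (congrFun hAB k)

section Cylinder

variable {M ι : Type*} (f : Equiv.Perm M) (P : ι → Set M) (A : ℤ → ι)

def cylinder (s : Set ℤ) : Set M :=
  ⋂ k ∈ s, ⇑(f ^ k) ⁻¹' P (A k)

variable {f P A}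

theorem cylinder_anti {s t : Set ℤ} (h : s ⊆ t) : cylinder f P A t ⊆ cylinder f P A s :=
  biInter_subset_biInter_left h

theorem cylinder_mono {Q : ι → Set M} (h : ∀ i, P i ⊆ Q i) (s : Set ℤ) :
    cylinder f P A s ⊆ cylinder f Q A s :=
  biInter_mono subset_rfl fun _ _ => preimage_mono (h _)

theorem preimage_zpow_neg_cylinder (n : ℤ) (s : Set ℤ) :
    ⇑(f ^ (-n)) ⁻¹' cylinder f P A s = ⋂ k ∈ s, ⇑(f ^ (k - n)) ⁻¹' P (A k) := by
  simp only [cylinder, preimage_iInter, ← preimage_comp, ← Equiv.Perm.coe_mul, ← zpow_add,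
    sub_eq_add_neg]

theorem iInter_cylinder_of_iUnion_eq_univ (s : ℕ → Set ℤ) (hs : ⋃ N, s N = univ) :
    ⋂ N, cylinder f P A (s N) = ⋂ k, ⇑(f ^ k) ⁻¹' P (A k) := by
  simp only [cylinder]
  rw [← biInter_iUnion, hs, biInter_univ]

theorem mapsTo_zpow_cylinder_Ico (a : ℤ) (n : ℕ) :
    MapsTo ⇑(f ^ a) (cylinder f P A (Ico a (a + n)))
      (⋂ k : Fin n, ⇑(f ^ (k : ℤ)) ⁻¹' P (A (a + k))) := by
  intro y hy
  simp only [mem_iInter, mem_preimage, ← Equiv.Perm.mul_apply, ← zpow_add]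
  intro k
  simpa only [add_comm, mem_preimage] using mem_iInter₂.mp hy (a + k) ⟨by omega, by omega⟩

variable [TopologicalSpace M]

theorem isClosed_cylinder (hcont : ∀ k : ℤ, Continuous ⇑(f ^ k)) (hP : ∀ i, IsClosed (P i))
    (s : Set ℤ) : IsClosed (cylinder f P A s) :=
  isClosed_biInter fun k _ => (hP _).preimage (hcont k)

variable [CompactSpace M]

theorem mem_closure_cylinder_Icc (hcont : ∀ k : ℤ, Continuous ⇑(f ^ k)) {x : M}
    (hx : ⋂ k, ⇑(f ^ k) ⁻¹' closure (P (A k)) = {x})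
    (hne : ∀ a b, a ≤ b → (cylinder f P A (Icc a b)).Nonempty) {a b : ℤ} (hab : a ≤ b) :
    x ∈ closure (cylinder f P A (Icc a b)) := by
  rw [mem_closure_iff_nhds]
  intro U hU
  let E : ℕ → Set M := fun N => cylinder f (fun i => closure (P i)) A (Icc (-N) N)
  have hEclosed : ∀ N, IsClosed (E N) :=
    fun N => isClosed_cylinder hcont (fun _ => isClosed_closure) _
  have hEanti : Antitone E := fun N N' h => cylinder_anti (Icc_subset_Icc (by omega) (by omega))
  have hEx : ⋂ N, E N = {x} := by
    rw [iInter_cylinder_of_iUnion_eq_univ _ (iUnion_eq_univ_iff.2 fun k =>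
      ⟨k.natAbs, by simpa only [mem_Icc, Int.natCast_natAbs] using abs_le.1 (le_refl |k|)⟩), hx]
  obtain ⟨N, hNU⟩ : ∃ N, E N ⊆ U :=
    exists_subset_nhds_of_isCompact' hEanti.directed_ge (fun N => (hEclosed N).isCompact)
      hEclosed (by rw [hEx]; rintro y rfl; exact hU)
  obtain ⟨y, hy⟩ := hne (min a (-N)) (max b N) (by omega)
  refine ⟨y, hNU ?_, cylinder_anti (Icc_subset_Icc (min_le_left _ _) (le_max_left _ _)) hy⟩
  exact cylinder_mono (fun _ => subset_closure) _
    (cylinder_anti (Icc_subset_Icc (min_le_right _ _) (le_max_right _ _)) hy)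

theorem word_mem_closure_cylinder (hcont : ∀ k : ℤ, Continuous ⇑(f ^ k)) {x : M}
    (hx : ⋂ k, ⇑(f ^ k) ⁻¹' closure (P (A k)) = {x})
    (hne : ∀ a b, a ≤ b → (cylinder f P A (Icc a b)).Nonempty) (a : ℤ) (n : ℕ) :
    (⋂ k : Fin n, ⇑(f ^ (k : ℤ)) ⁻¹' P (A (a + k))).Nonempty ∧
      (f ^ a) x ∈ closure (⋂ k : Fin n, ⇑(f ^ (k : ℤ)) ⁻¹' P (A (a + k))) := by
  have hsub : cylinder f P A (Icc a (a + n)) ⊆ cylinder f P A (Ico a (a + n)) :=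
    cylinder_anti Ico_subset_Icc_self
  have hmaps := mapsTo_zpow_cylinder_Ico (f := f) (P := P) (A := A) a n
  obtain ⟨y, hy⟩ := hne a (a + n) (by omega)
  exact ⟨⟨_, hmaps (hsub hy)⟩, map_mem_closure (hcont a)
    (closure_mono hsub (mem_closure_cylinder_Icc hcont hx hne (by omega))) hmaps⟩

end Cylinder

theorem stmt_2_general {M : Type*} [MetricSpace M] [CompactSpace M]
    (f : Equiv.Perm M) (hf : Continuous f) (hf' : Continuous f.symm)
    (ι : Type*) [Fintype ι] (P : ι → Set M)
    -- local multiplicity of the iterated partitions is at most 4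
    (hmult : ∀ n : ℕ, 1 ≤ n → ∀ x : M,
      Set.ncard {w : Fin n → ι |
        (⋂ k : Fin n, ⇑(f ^ (k : ℤ)) ⁻¹' P (w k)).Nonempty ∧
        x ∈ closure (⋂ k : Fin n, ⇑(f ^ (k : ℤ)) ⁻¹' P (w k))} ≤ 4)
    (Sig : Set (ℤ → ι))
    (hSig : Sig = {A : ℤ → ι | ∀ n m : ℤ, n ≤ m →
      (⋂ k ∈ Set.Icc n m, (⇑(f ^ (k - n)) ⁻¹' P (A k))).Nonempty})
    (p : Sig → M)
    (hp : ∀ A : Sig, (⋂ n : ℤ, ⇑(f ^ n) ⁻¹' closure (P (A.1 n))) = {p A}) :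
    ∀ x : M, (p ⁻¹' {x}).Finite ∧ (p ⁻¹' {x}).ncard ≤ 4 := by
  have hcont := Equiv.Perm.continuous_zpow hf hf'
  have hne (A : Sig) (a b : ℤ) (hab : a ≤ b) : (cylinder f P A (Icc a b)).Nonempty := by
    obtain ⟨y, hy⟩ := (Set.ext_iff.1 hSig A).1 A.2 a b hab
    rw [← preimage_zpow_neg_cylinder] at hy
    exact ⟨_, hy⟩
  intro x
  refine finite_and_ncard_le_of_forall_finite_subset fun t ht htfin => ?_
  obtain ⟨m, hinj⟩ := (htfin.image Subtype.val).exists_injOn_restrict_window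
  rw [← (hinj.comp Subtype.val_injective.injOn (mapsTo_image _ _)).ncard_image]
  refine (ncard_le_ncard ?_ (toFinite _)).trans (hmult (2 * m + 1) (by omega) ((f ^ (-m : ℤ)) x))
  rintro _ ⟨A, hA, rfl⟩
  exact word_mem_closure_cylinder hcont ((ht hA).symm ▸ hp A) (hne A) (-m) _

/-- if every iterated partition `Pⁿ` has local multiplicity at most 4
(every point lies in the closure of at most 4 nonempty `n`-cylinders), then the coding
map `p : Σ(f,P) → M` is at most 4-to-1. -/
theorem stmt_2 {M : Type*} [MetricSpace M] [CompactSpace M]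
    (f : Equiv.Perm M) (hf : Continuous f) (hf' : Continuous f.symm)
    (r₀ : ℝ) (hr₀ : 0 < r₀)
    (hexp : ∀ x y : M, (∀ n : ℤ, dist ((f ^ n) x) ((f ^ n) y) < r₀) → x = y)
    (ι : Type*) [Fintype ι] (P : ι → Set M)
    (hopen : ∀ i, IsOpen (P i))
    (hdisj : ∀ i j, i ≠ j → Disjoint (P i) (P j))
    (hdense : Dense (⋃ i, P i))
    (hdiam : ∀ i, Metric.diam (P i) < r₀)
    -- local multiplicity of the iterated partitions is at most 4
    (hmult : ∀ n : ℕ, 1 ≤ n → ∀ x : M,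
      Set.ncard {w : Fin n → ι |
        (⋂ k : Fin n, ⇑(f ^ (k : ℤ)) ⁻¹' P (w k)).Nonempty ∧
        x ∈ closure (⋂ k : Fin n, ⇑(f ^ (k : ℤ)) ⁻¹' P (w k))} ≤ 4)
    (Sig : Set (ℤ → ι))
    (hSig : Sig = {A : ℤ → ι | ∀ n m : ℤ, n ≤ m →
      (⋂ k ∈ Set.Icc n m, (⇑(f ^ (k - n)) ⁻¹' P (A k))).Nonempty})
    (p : Sig → M)
    (hp : ∀ A : Sig, (⋂ n : ℤ, ⇑(f ^ n) ⁻¹' closure (P (A.1 n))) = {p A}) :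
    ∀ x : M, (p ⁻¹' {x}).Finite ∧ (p ⁻¹' {x}).ncard ≤ 4 :=
  stmt_2_general f hf hf' ι P hmult Sig hSig p hp
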